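/- arXiv:2211.16709 — 2 statements merged into one kernel-verified Lean document; each statement's English description precedes it below -/
import Mathlib

section
/- Let m be a positive integer and let a, b be real numbers with a > 0 and b > 0. Then Σ_{i=1}^m ( ψ₀(a+b+i+m)/(a+i) + ψ₀(a+b+i+m)/(b+i) − ψ₀(a+b+i)/(a+i) − ψ₀(a+b+i)/(b+i) ) = (a+b+2m)·ψ₀(a+b+2m)/((a+m)(b+m)) − (1/(a+m) + 1/a + 1/(b+m) + 1/b)·ψ₀(a+b+m) + (1/a + 1/b)·ψ₀(a+b) + (ψ₀(a+m) − ψ₀(a))·(ψ₀(b+m) − ψ₀(b)). -/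
open Real Finset

/-- The digamma function `ψ₀(x) = Γ′(x)/Γ(x)` on the reals. -/
noncomputable def rdigamma (x : ℝ) : ℝ := deriv Real.Gamma x / Real.Gamma x

lemma ne_neg_nat {x : ℝ} (hx : 0 < x) : ∀ n : ℕ, x ≠ -n := fun n =>
  ((neg_nonpos.mpr (Nat.cast_nonneg n)).trans_lt hx).ne'

lemma rdigamma_add_one (x : ℝ) (hx : 0 < x) : rdigamma (x + 1) = rdigamma x + 1 / x := by
  have hdx : DifferentiableAt ℝ Real.Gamma x := Real.differentiableAt_Gamma (ne_neg_nat hx)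
  have hdx1 : DifferentiableAt ℝ Real.Gamma (x + 1) :=
    Real.differentiableAt_Gamma (ne_neg_nat (by linarith))
  have h1 : HasDerivAt (fun y : ℝ => Real.Gamma (y + 1)) (deriv Real.Gamma (x + 1)) x := by
    simpa [Function.comp_def] using hdx1.hasDerivAt.comp x ((hasDerivAt_id x).add_const 1)
  have h2 : HasDerivAt (fun y : ℝ => y * Real.Gamma y)
      (1 * Real.Gamma x + x * deriv Real.Gamma x) x := (hasDerivAt_id x).mul hdx.hasDerivAt
  have heq : (fun y : ℝ => Real.Gamma (y + 1)) =ᶠ[nhds x] fun y => y * Real.Gamma y := by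
    filter_upwards [eventually_gt_nhds hx] with y hy
    exact Real.Gamma_add_one hy.ne'
  have h3 : HasDerivAt (fun y : ℝ => y * Real.Gamma y) (deriv Real.Gamma (x + 1)) x :=
    h1.congr_of_eventuallyEq heq.symm
  have hder : deriv Real.Gamma (x + 1) = Real.Gamma x + x * deriv Real.Gamma x := by
    have := h3.unique h2; linarith
  have hΓ : Real.Gamma (x + 1) = x * Real.Gamma x := Real.Gamma_add_one hx.ne'
  have hΓpos := Real.Gamma_pos_of_pos hx
  unfold rdigamma
  rw [hder, hΓ]
  field_simp
  ring

lemma rdigamma_add_nat (x : ℝ) (hx : 0 < x) (n : ℕ) :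
    rdigamma (x + n) = rdigamma x + ∑ k ∈ Finset.range n, 1 / (x + k) := by
  induction n with
  | zero => simp
  | succ n ih =>
    have hxn : (0:ℝ) < x + n := by positivity
    rw [Finset.sum_range_succ, show (x + (n+1:ℕ) : ℝ) = (x + n) + 1 by push_cast; ring,
      rdigamma_add_one _ hxn, ih]
    ring

lemma sum_Icc_inv (x : ℝ) (hx : 0 < x) (m : ℕ) :
    ∑ j ∈ Finset.Icc 1 m, 1 / (x + j) =
      rdigamma (x + m) + 1 / (x + m) - rdigamma x - 1 / x := by
  have h1 : ∑ j ∈ Finset.Icc 1 m, 1 / (x + j) = ∑ k ∈ Finset.range m, 1 / (x + 1 + k) := by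
    rw [← Finset.Ico_add_one_right_eq_Icc, Finset.sum_Ico_eq_sum_range]
    refine Finset.sum_congr (by norm_num) fun k _ => ?_
    push_cast; ring_nf
  have h2 := rdigamma_add_nat (x + 1) (by linarith) m
  have h3 : rdigamma (x + 1 + m) = rdigamma (x + m) + 1 / (x + m) := by
    rw [show x + 1 + (m:ℝ) = (x + m) + 1 by ring, rdigamma_add_one _ (by positivity)]
  have h4 := rdigamma_add_one x hx
  rw [h1]
  linarith

lemma key_prod (m : ℕ) (a b : ℝ) (ha : 0 < a) (hb : 0 < b) :
    ∑ i ∈ Finset.Icc 1 m, (∑ j ∈ Finset.Icc 1 m, 1 / (a + b + i + j)) * (1 / (a + i) + 1 / (b + i))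
      = (∑ i ∈ Finset.Icc 1 m, 1 / (a + i)) * (∑ i ∈ Finset.Icc 1 m, 1 / (b + i)) := by
  rw [Finset.sum_mul_sum]
  have hL : ∀ i ∈ Finset.Icc 1 m,
      (∑ j ∈ Finset.Icc 1 m, 1 / (a + b + i + j)) * (1 / (a + i) + 1 / (b + i))
      = (∑ j ∈ Finset.Icc 1 m, 1 / (a + b + i + j) * (1 / (a + i)))
        + ∑ j ∈ Finset.Icc 1 m, 1 / (a + b + i + j) * (1 / (b + i)) := by
    intro i _
    rw [← Finset.sum_add_distrib, Finset.sum_mul]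
    exact Finset.sum_congr rfl fun j _ => by ring
  rw [Finset.sum_congr rfl hL, Finset.sum_add_distrib]
  have hswap : ∑ i ∈ Finset.Icc 1 m, ∑ j ∈ Finset.Icc 1 m, 1 / (a + b + i + j) * (1 / (b + i))
      = ∑ i ∈ Finset.Icc 1 m, ∑ j ∈ Finset.Icc 1 m, 1 / (a + b + i + j) * (1 / (b + j)) := by
    rw [Finset.sum_comm]
    exact Finset.sum_congr rfl fun i _ => Finset.sum_congr rfl fun j _ => by ring_nf
  rw [hswap, ← Finset.sum_add_distrib]
  refine Finset.sum_congr rfl fun i hi => ?_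
  rw [← Finset.sum_add_distrib]
  refine Finset.sum_congr rfl fun j hj => ?_
  have hai : (0:ℝ) < a + i := by positivity
  have hbj : (0:ℝ) < b + j := by positivity
  have hab : (0:ℝ) < a + b + i + j := by positivity
  field_simp
  ring

theorem digamma_symmetric_sum_identity (m : ℕ) (hm : 1 ≤ m) (a b : ℝ)
    (ha : 0 < a) (hb : 0 < b) :
    ∑ i ∈ Finset.Icc 1 m,
        (rdigamma (a + b + i + m) / (a + i) + rdigamma (a + b + i + m) / (b + i)
          - rdigamma (a + b + i) / (a + i) - rdigamma (a + b + i) / (b + i)) =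
      (a + b + 2 * m) * rdigamma (a + b + 2 * m) / ((a + m) * (b + m))
        - (1 / (a + m) + 1 / a + 1 / (b + m) + 1 / b) * rdigamma (a + b + m)
        + (1 / a + 1 / b) * rdigamma (a + b)
        + (rdigamma (a + m) - rdigamma a) * (rdigamma (b + m) - rdigamma b) := by
  have hA : (0:ℝ) < a + b := by linarith
  have step1 : ∑ i ∈ Finset.Icc 1 m,
        (rdigamma (a + b + i + m) / (a + i) + rdigamma (a + b + i + m) / (b + i)
          - rdigamma (a + b + i) / (a + i) - rdigamma (a + b + i) / (b + i))
      = ∑ i ∈ Finset.Icc 1 m,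
          ((∑ j ∈ Finset.Icc 1 m, 1 / (a + b + i + j)) * (1 / (a + i) + 1 / (b + i))
            + (1 / (a + b + i) - 1 / (a + b + i + m)) * (1 / (a + i) + 1 / (b + i))) := by
    refine Finset.sum_congr rfl fun i hi => ?_
    have hx : (0:ℝ) < a + b + i := by positivity
    rw [sum_Icc_inv (a + b + i) hx m]
    ring
  rw [step1, Finset.sum_add_distrib, key_prod m a b ha hb]
  have hT2 : ∑ i ∈ Finset.Icc 1 m, (1 / (a + b + i) - 1 / (a + b + i + m)) * (1 / (a + i) + 1 / (b + i))
      = (1 / b - 1 / (b + m)) * (∑ i ∈ Finset.Icc 1 m, 1 / (a + i))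
        + (1 / a - 1 / (a + m)) * (∑ i ∈ Finset.Icc 1 m, 1 / (b + i))
        - (1 / a + 1 / b) * (∑ i ∈ Finset.Icc 1 m, 1 / (a + b + i))
        + (1 / (a + m) + 1 / (b + m)) * (∑ i ∈ Finset.Icc 1 m, 1 / (a + b + m + i)) := by
    rw [Finset.mul_sum, Finset.mul_sum, Finset.mul_sum, Finset.mul_sum,
      ← Finset.sum_add_distrib, ← Finset.sum_sub_distrib, ← Finset.sum_add_distrib]
    refine Finset.sum_congr rfl fun i hi => ?_
    have h1 : (0:ℝ) < a + i := by positivity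
    have h2 : (0:ℝ) < b + i := by positivity
    have h3 : (0:ℝ) < a + b + i := by positivity
    have h4 : (0:ℝ) < a + b + i + m := by positivity
    have h5 : (0:ℝ) < a + m := by positivity
    have h6 : (0:ℝ) < b + m := by positivity
    have h7 : (0:ℝ) < a + b + m + i := by positivity
    have h8 : a + b + (i:ℝ) + m = a + b + m + i := by ring
    rw [h8]
    field_simp
    ring
  rw [hT2, sum_Icc_inv a ha m, sum_Icc_inv b hb m, sum_Icc_inv (a + b) hA m,
    sum_Icc_inv (a + b + m) (by positivity) m,
    show a + b + (m:ℝ) + m = a + b + 2 * m by ring]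
  have h1 : a ≠ 0 := ha.ne'
  have h2 : b ≠ 0 := hb.ne'
  have h3 : a + (m:ℝ) ≠ 0 := by positivity
  have h4 : b + (m:ℝ) ≠ 0 := by positivity
  have h5 : a + b ≠ 0 := hA.ne'
  have h6 : a + b + (m:ℝ) ≠ 0 := by positivity
  have h7 : a + b + 2 * (m:ℝ) ≠ 0 := by positivity
  field_simp
  ring
end

section
/- Let 1 ≤ m ≤ n be integers and let a be a complex number that is not a nonpositive integer and with a ≠ n − m + 1. Then Σ_{i=1}^m (Γ(n−i+1)/Γ(m+a−i+1)) · ψ₀(m+a−i+1) = (1/(1−a−m+n)) · ( (Γ(n+1)/Γ(a+m)) · (ψ₀(a+m) − 1/(1−a−m+n)) − (Γ(n−m+1)/Γ(a)) · (ψ₀(a) − 1/(1−a−m+n)) ). -/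
open Complex Finset

/-- The digamma function `ψ₀(z) = Γ′(z)/Γ(z)`. -/
noncomputable def cdigamma (z : ℂ) : ℂ := deriv Complex.Gamma z / Complex.Gamma z

lemma deriv_Gamma_add_one {z : ℂ} (hz : ∀ k : ℕ, z ≠ -(k : ℂ)) :
    deriv Complex.Gamma (z + 1) = z * deriv Complex.Gamma z + Complex.Gamma z := by
  have hz0 : z ≠ 0 := by simpa using hz 0
  have hdiff : DifferentiableAt ℂ Complex.Gamma z := Complex.differentiableAt_Gamma z hz
  have hEq : (fun s : ℂ => Complex.Gamma (s + 1)) =ᶠ[nhds z] fun s => s * Complex.Gamma s := by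
    filter_upwards [eventually_ne_nhds hz0] with s hs
    exact Complex.Gamma_add_one s hs
  have h1 : deriv (fun s : ℂ => Complex.Gamma (s + 1)) z
      = deriv (fun s : ℂ => s * Complex.Gamma s) z := hEq.deriv_eq
  rw [deriv_comp_add_const] at h1
  rw [h1, deriv_fun_mul (c := fun s : ℂ => s) differentiableAt_id hdiff, deriv_id'']
  ring

lemma cdigamma_add_one {z : ℂ} (hz : ∀ k : ℕ, z ≠ -(k : ℂ)) :
    cdigamma (z + 1) = cdigamma z + 1 / z := by
  have hz0 : z ≠ 0 := by simpa using hz 0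
  have hΓ : Complex.Gamma z ≠ 0 := Complex.Gamma_ne_zero hz
  rw [cdigamma, cdigamma, deriv_Gamma_add_one hz, Complex.Gamma_add_one z hz0]
  field_simp

lemma step_alg (z w K Γz Γw Dz : ℂ) (hz : z ≠ 0) (hΓz : Γz ≠ 0) (hK : K ≠ 0)
    (hwz : w = z + K) :
    Γw / (z * Γz) * (Dz + 1 / z) =
      1 / K * (w * Γw / (z * Γz)) * (Dz + 1 / z - 1 / K) -
        1 / K * (Γw / Γz) * (Dz - 1 / K) := by
  subst hwz
  have e : ∀ x y : ℂ, x / y = x * y⁻¹ := fun x y => div_eq_mul_inv x y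
  simp only [e, one_mul, mul_inv]
  have hz' := mul_inv_cancel₀ hz
  have hK' := mul_inv_cancel₀ hK
  linear_combination (Γw * Γz⁻¹ * z⁻¹ * (Dz + z⁻¹ - K⁻¹)
      + Γw * Γz⁻¹ * (-(Dz * K⁻¹) + K⁻¹ ^ 2 - z⁻¹ * Dz - z⁻¹ ^ 2)) * hz'
    + (Γw * Γz⁻¹ * (-(z⁻¹ * Dz) + z⁻¹ * K⁻¹ - z⁻¹ ^ 2)) * hK'

theorem gamma_ratio_digamma_sum_identity (m n : ℕ) (hm : 1 ≤ m) (hmn : m ≤ n) (a : ℂ)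
    (ha : ∀ k : ℕ, a ≠ -(k : ℕ)) (ha' : a ≠ (n : ℂ) - m + 1) :
    ∑ i ∈ Finset.Icc 1 m,
        (Complex.Gamma ((n : ℂ) - i + 1) / Complex.Gamma ((m : ℂ) + a - i + 1))
          * cdigamma ((m : ℂ) + a - i + 1) =
      (1 / (1 - a - m + n)) *
        ((Complex.Gamma ((n : ℂ) + 1) / Complex.Gamma (a + m))
            * (cdigamma (a + m) - 1 / (1 - a - m + n))
          - (Complex.Gamma ((n : ℂ) - m + 1) / Complex.Gamma a)
            * (cdigamma a - 1 / (1 - a - m + n))) := by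
  have hc : (1 - a - (m : ℂ) + n) ≠ 0 := by
    intro h
    exact ha' (by linear_combination -h)
  set c : ℂ := 1 / (1 - a - (m : ℂ) + n) with hcdef
  set V : ℕ → ℂ := fun j =>
    c * (Complex.Gamma ((n : ℂ) - j + 2) / Complex.Gamma ((m : ℂ) + a - j + 1)) *
      (cdigamma ((m : ℂ) + a - j + 1) - c) with hV
  -- per-term telescoping identity
  have step : ∀ j : ℕ, 1 ≤ j → j ≤ m →
      (Complex.Gamma ((n : ℂ) - j + 1) / Complex.Gamma ((m : ℂ) + a - j + 1))
        * cdigamma ((m : ℂ) + a - j + 1) = V j - V (j + 1) := by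
    intro j hj1 hjm
    have hzcast : (m : ℂ) - j = ((m - j : ℕ) : ℂ) := by
      push_cast [Nat.cast_sub hjm]; ring
    have hz : ∀ k : ℕ, (m : ℂ) + a - j ≠ -(k : ℂ) := by
      intro k hk
      apply ha (k + (m - j))
      have : a = -(k : ℂ) - ((m - j : ℕ) : ℂ) := by
        rw [← hzcast]; linear_combination hk
      rw [this]; push_cast; ring
    have hz0 : (m : ℂ) + a - j ≠ 0 := by simpa using hz 0
    have hΓz : Complex.Gamma ((m : ℂ) + a - j) ≠ 0 := Complex.Gamma_ne_zero hz
    have hΓz1 : Complex.Gamma ((m : ℂ) + a - j + 1) ≠ 0 := by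
      rw [Complex.Gamma_add_one _ hz0]
      exact mul_ne_zero hz0 hΓz
    have hwcast : (n : ℂ) - j + 1 = ((n - j + 1 : ℕ) : ℂ) := by
      push_cast [Nat.cast_sub (hjm.trans hmn)]; ring
    have hw0 : (n : ℂ) - j + 1 ≠ 0 := by
      rw [hwcast]
      exact_mod_cast Nat.succ_ne_zero (n - j)
    have hΓw : Complex.Gamma ((n : ℂ) - j + 2) = ((n : ℂ) - j + 1) * Complex.Gamma ((n : ℂ) - j + 1) := by
      have : (n : ℂ) - j + 2 = ((n : ℂ) - j + 1) + 1 := by ring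
      rw [this, Complex.Gamma_add_one _ hw0]
    have hψ : cdigamma ((m : ℂ) + a - j + 1) = cdigamma ((m : ℂ) + a - j) + 1 / ((m : ℂ) + a - j) :=
      cdigamma_add_one hz
    have hΓza : Complex.Gamma ((m : ℂ) + a - j + 1) = ((m : ℂ) + a - j) * Complex.Gamma ((m : ℂ) + a - j) :=
      Complex.Gamma_add_one _ hz0
    have hV1 : V (j + 1) = c * (Complex.Gamma ((n : ℂ) - j + 1) / Complex.Gamma ((m : ℂ) + a - j)) *
        (cdigamma ((m : ℂ) + a - j) - c) := by
      rw [hV]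
      push_cast
      have e1 : (n : ℂ) - (j + 1) + 2 = (n : ℂ) - j + 1 := by ring
      have e2 : (m : ℂ) + a - (j + 1) + 1 = (m : ℂ) + a - j := by ring
      rw [e1, e2]
    rw [hV1]
    simp only [hV]
    rw [hΓw, hψ, hΓza, hcdef]
    exact step_alg ((m : ℂ) + a - j) ((n : ℂ) - j + 1) (1 - a - (m : ℂ) + n)
      (Complex.Gamma ((m : ℂ) + a - j)) (Complex.Gamma ((n : ℂ) - j + 1))
      (cdigamma ((m : ℂ) + a - j)) hz0 hΓz hc (by ring)

  have hsum : ∑ i ∈ Finset.Icc 1 m,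
      (Complex.Gamma ((n : ℂ) - i + 1) / Complex.Gamma ((m : ℂ) + a - i + 1))
        * cdigamma ((m : ℂ) + a - i + 1) = V 1 - V (m + 1) := by
    rw [← Finset.Ico_add_one_right_eq_Icc, Finset.sum_Ico_eq_sum_range]
    have : ∀ i ∈ Finset.range (m + 1 - 1),
        (Complex.Gamma ((n : ℂ) - (1 + i : ℕ) + 1) / Complex.Gamma ((m : ℂ) + a - (1 + i : ℕ) + 1))
          * cdigamma ((m : ℂ) + a - (1 + i : ℕ) + 1)
          = (fun k => V (k + 1)) i - (fun k => V (k + 1)) (i + 1) := by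
      intro i hi
      simp only [Finset.mem_range] at hi
      have hi' : 1 + i ≤ m := by omega
      have := step (1 + i) (by omega) hi'
      simpa [Nat.add_comm 1 i] using this
    rw [Finset.sum_congr rfl this, Finset.sum_range_sub']
    show V (0 + 1) - V (m + 1 - 1 + 1) = V 1 - V (m + 1)
    congr 2 <;> omega
  rw [hsum, hV]
  have e1 : (n : ℂ) - (1 : ℕ) + 2 = (n : ℂ) + 1 := by push_cast; ring
  have e2 : (m : ℂ) + a - (1 : ℕ) + 1 = a + m := by push_cast; ring
  have e3 : (n : ℂ) - ((m + 1 : ℕ) : ℂ) + 2 = (n : ℂ) - m + 1 := by push_cast; ring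
  have e4 : (m : ℂ) + a - ((m + 1 : ℕ) : ℂ) + 1 = a := by push_cast; ring
  simp only [Nat.cast_one, Nat.cast_add] at *
  rw [show (n:ℂ) - 1 + 2 = (n:ℂ) + 1 by ring, show (m:ℂ) + a - 1 + 1 = a + m by ring,
    show (n:ℂ) - ((m:ℂ) + 1) + 2 = (n:ℂ) - m + 1 by ring,
    show (m:ℂ) + a - ((m:ℂ) + 1) + 1 = a by ring]
  ring
end
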